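/- Let φ₁, φ₂, φ₃ > 0 and define q(s) = φ₁ s² + φ₂ s + φ₃. Let a < b and let Ψ : [a,b] → ℝ be differentiable with Ψ(a) = 0, Ψ(b) = 1, 0 ≤ Ψ(t) ≤ 1 for all t ∈ [a,b], and Ψ'(t) ≤ q(Ψ(t)) for all t ∈ [a,b]. Then b - a ≥ ∫₀¹ ds / (φ₁ s² + φ₂ s + φ₃). -/
import Mathlib


/-- Riccati comparison estimate giving the minimal dwell time
τ* = ∫₀¹ ds/(φ₁s² + φ₂s + φ₃) between consecutive events. -/
theorem stmt3 (φ1 φ2 φ3 : ℝ) (h1 : 0 < φ1) (h2 : 0 < φ2) (h3 : 0 < φ3)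
    (a b : ℝ) (hab : a < b) (Ψ Ψ' : ℝ → ℝ)
    (hderiv : ∀ t ∈ Set.Icc a b, HasDerivWithinAt Ψ (Ψ' t) (Set.Icc a b) t)
    (ha : Ψ a = 0) (hb : Ψ b = 1)
    (hbound : ∀ t ∈ Set.Icc a b, 0 ≤ Ψ t ∧ Ψ t ≤ 1)
    (hineq : ∀ t ∈ Set.Icc a b, Ψ' t ≤ φ1 * (Ψ t) ^ 2 + φ2 * Ψ t + φ3) :
    b - a ≥ ∫ s in (0:ℝ)..1, 1 / (φ1 * s ^ 2 + φ2 * s + φ3) := by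
  set q : ℝ → ℝ := fun s => φ1 * s ^ 2 + φ2 * s + φ3 with hqdef
  have hqpos : ∀ s : ℝ, 0 ≤ s → 0 < q s := by
    intro s hs; simp only [hqdef]; nlinarith
  have hqcont : Continuous q := by
    simp only [hqdef]; continuity
  set G : ℝ → ℝ := fun x => ∫ s in (0:ℝ)..x, 1 / q s with hGdef
  have hGderiv : ∀ x ∈ Set.Icc (0:ℝ) 1, HasDerivAt G (1 / q x) x := by
    intro x hx
    apply intervalIntegral.integral_hasDerivAt_right
    · apply ContinuousOn.intervalIntegrable
      intro s hs
      rw [Set.uIcc_of_le hx.1] at hs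
      exact (ContinuousAt.div continuousAt_const hqcont.continuousAt
        (ne_of_gt (hqpos s hs.1))).continuousWithinAt
    · exact (measurable_const.div hqcont.measurable).stronglyMeasurable.stronglyMeasurableAtFilter
    · exact ContinuousAt.div continuousAt_const hqcont.continuousAt
        (ne_of_gt (hqpos x hx.1))
  set f : ℝ → ℝ := fun t => G (Ψ t) - t with hfdef
  have hf : ∀ t ∈ Set.Icc a b,
      HasDerivWithinAt f (1 / q (Ψ t) * Ψ' t - 1) (Set.Icc a b) t := by
    intro t ht
    have hmem : Ψ t ∈ Set.Icc (0:ℝ) 1 := ⟨(hbound t ht).1, (hbound t ht).2⟩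
    exact ((hGderiv (Ψ t) hmem).comp_hasDerivWithinAt t (hderiv t ht)).sub
      (hasDerivWithinAt_id t _)
  have hle : ∀ t ∈ Set.Icc a b, 1 / q (Ψ t) * Ψ' t - 1 ≤ 0 := by
    intro t ht
    have hq := hqpos (Ψ t) (hbound t ht).1
    have h := hineq t ht
    rw [sub_nonpos, one_div, inv_mul_le_iff₀ hq]
    simpa [hqdef] using h
  have hA : AntitoneOn f (Set.Icc a b) := by
    apply antitoneOn_of_deriv_nonpos (convex_Icc a b)
    · exact fun t ht => (hf t ht).continuousWithinAt
    · intro x hx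
      rw [interior_Icc] at hx
      exact ((hf x (Set.Ioo_subset_Icc_self hx)).hasDerivAt
        (Icc_mem_nhds hx.1 hx.2)).differentiableAt.differentiableWithinAt
    · intro x hx
      rw [interior_Icc] at hx
      have h := (hf x (Set.Ioo_subset_Icc_self hx)).hasDerivAt (Icc_mem_nhds hx.1 hx.2)
      rw [h.deriv]
      exact hle x (Set.Ioo_subset_Icc_self hx)
  have key : f b ≤ f a :=
    hA (Set.left_mem_Icc.2 hab.le) (Set.right_mem_Icc.2 hab.le) hab.le
  have hfa : f a = -a := by simp [hfdef, ha, hGdef, intervalIntegral.integral_same]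
  have hfb : f b = G 1 - b := by simp [hfdef, hb]
  have : G 1 ≤ b - a := by rw [hfa, hfb] at key; linarith
  simpa [hGdef, hqdef] using this
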